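/- Backward monotonicity: for a simplicial model C and faces X ⊆ Y, if C, Y ⊨ φ and C, X ⋈ φ, then C, X ⊨ φ. -/
import Mathlib


structure SimplicialModel (A : Type) (P : A → Type) where
  V : Type
  C : Set (Finset V)
  C_nonempty : C.Nonempty
  mem_nonempty : ∀ X ∈ C, X.Nonempty
  downward : ∀ X ∈ C, ∀ Y : Finset V, Y.Nonempty → Y ⊆ X → Y ∈ C
  vertex_mem : ∀ v : V, ({v} : Finset V) ∈ C
  chi : V → A
  chromatic : ∀ X ∈ C, ∀ v ∈ X, ∀ u ∈ X, chi v = chi u → v = u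
  val : V → Set (Σ a : A, P a)
  val_local : ∀ v : V, ∀ s ∈ val v, s.1 = chi v

inductive Formula (A : Type) (P : A → Type) : Type where
  | var : (a : A) → P a → Formula A P
  | neg : Formula A P → Formula A P
  | and : Formula A P → Formula A P → Formula A P
  | know : A → Formula A P → Formula A P

/-- `a ∈ χ(X ∩ Y)`: the faces `X` and `Y` share an `a`-colored vertex. -/
def adj {A : Type} {P : A → Type} (M : SimplicialModel A P) (a : A)
    (X Y : Finset M.V) : Prop :=
  ∃ v, v ∈ X ∧ v ∈ Y ∧ M.chi v = a

/-- The definability relation `C, X ⋈ φ`. -/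
def Defin {A : Type} {P : A → Type} (M : SimplicialModel A P) :
    Formula A P → Finset M.V → Prop
  | .var a _, X => ∃ v ∈ X, M.chi v = a
  | .neg φ, X => Defin M φ X
  | .and φ ψ, X => Defin M φ X ∧ Defin M ψ X
  | .know a φ, X => ∃ Y ∈ M.C, adj M a X Y ∧ Defin M φ Y

/-- The truth relation `C, X ⊨ φ`. -/
def Truth {A : Type} {P : A → Type} (M : SimplicialModel A P) :
    Formula A P → Finset M.V → Prop
  | .var a p, X => ∃ v ∈ X, (⟨a, p⟩ : Σ a : A, P a) ∈ M.val v
  | .neg φ, X => Defin M (.neg φ) X ∧ ¬ Truth M φ X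
  | .and φ ψ, X => Truth M φ X ∧ Truth M ψ X
  | .know a φ, X => Defin M (.know a φ) X ∧
      ∀ Y ∈ M.C, adj M a X Y → Defin M φ Y → Truth M φ Y

/-- Implication `φ → ψ` defined as `¬(φ ∧ ¬ψ)`. -/
def Formula.impl {A : Type} {P : A → Type} (φ ψ : Formula A P) : Formula A P :=
  .neg (.and φ (.neg ψ))

/-- Disjunction `φ ∨ ψ` defined as `¬(¬φ ∧ ¬ψ)`. -/
def Formula.or {A : Type} {P : A → Type} (φ ψ : Formula A P) : Formula A P :=
  .neg (.and (.neg φ) (.neg ψ))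


theorem truth_mono_aux {A : Type} {P : A → Type}
    (M : SimplicialModel A P) (φ : Formula A P) :
    ∀ X Y : Finset M.V, X ∈ M.C → Y ∈ M.C → X ⊆ Y →
      ((Truth M φ Y → Defin M φ X → Truth M φ X) ∧
       (Truth M φ X → Defin M φ Y → Truth M φ Y)) := by
  induction φ with
  | var a p =>
    intro X Y hX hY hXY
    constructor
    · rintro ⟨v, hv, hval⟩ ⟨u, hu, hchi⟩
      have hva : M.chi v = a := (M.val_local v _ hval).symm
      have : v = u := M.chromatic Y hY v hv u (hXY hu) (hva.trans hchi.symm)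
      exact ⟨u, hu, this ▸ hval⟩
    · rintro ⟨v, hv, hval⟩ _
      exact ⟨v, hXY hv, hval⟩
  | neg φ ih =>
    intro X Y hX hY hXY
    constructor
    · rintro ⟨hDY, hnT⟩ hD
      exact ⟨hD, fun hTX => hnT ((ih X Y hX hY hXY).2 hTX hDY)⟩
    · rintro ⟨hDX, hnT⟩ hD
      exact ⟨hD, fun hTY => hnT ((ih X Y hX hY hXY).1 hTY hDX)⟩
  | and φ ψ ihφ ihψ =>
    intro X Y hX hY hXY
    constructor
    · rintro ⟨h1, h2⟩ ⟨d1, d2⟩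
      exact ⟨(ihφ X Y hX hY hXY).1 h1 d1, (ihψ X Y hX hY hXY).1 h2 d2⟩
    · rintro ⟨h1, h2⟩ ⟨d1, d2⟩
      exact ⟨(ihφ X Y hX hY hXY).2 h1 d1, (ihψ X Y hX hY hXY).2 h2 d2⟩
  | know a φ ih =>
    intro X Y hX hY hXY
    constructor
    · rintro ⟨_, hall⟩ hD
      refine ⟨hD, fun Z hZ hadj hDZ => ?_⟩
      obtain ⟨v, hvX, hvZ, hchi⟩ := hadj
      exact hall Z hZ ⟨v, hXY hvX, hvZ, hchi⟩ hDZ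
    · rintro ⟨hDX, hall⟩ hD
      refine ⟨hD, fun Z hZ hadj hDZ => ?_⟩
      obtain ⟨v, hvY, hvZ, hchi⟩ := hadj
      obtain ⟨W, _, ⟨u, huX, _, hchu⟩, _⟩ := hDX
      have huv : u = v := M.chromatic Y hY u (hXY huX) v hvY (hchu.trans hchi.symm)
      exact hall Z hZ ⟨v, huv ▸ huX, hvZ, hchi⟩ hDZ

/-- Backward monotonicity: truth at a larger face plus definability at a smaller face
gives truth at the smaller face. -/
theorem truth_back_monotone {A : Type} {P : A → Type}
    (M : SimplicialModel A P) (X Y : Finset M.V) (hX : X ∈ M.C) (hY : Y ∈ M.C)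
    (hXY : X ⊆ Y) (φ : Formula A P) (hT : Truth M φ Y) (hD : Defin M φ X) :
    Truth M φ X :=
  (truth_mono_aux M φ X Y hX hY hXY).1 hT hD
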